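/- Under the hypotheses of the Mysovskikh-type theorem (P : ℝⁿ → ℝᵐ continuously differentiable; s = ‖P(u⁰)‖_∞; ‖P'(u)ᵀh‖_∞ ≥ μ‖h‖₁ for all h ∈ ℝᵐ and all u ∈ B_ρ = {u : ‖u − u⁰‖₁ ≤ ρ}; ‖(P'(a) − P'(b))v‖_∞ ≤ L‖a−b‖₁‖v‖₁ for all a, b ∈ B_ρ, v ∈ ℝⁿ; Ls/μ² < 2 and (2μ/L)·H₀(Ls/(2μ²)) < ρ), every sparse-Newton sequence (uᵏ) from u⁰ with unit step-size satisfies the quadratic residual rate ‖P(uᵏ)‖_∞ ≤ (2μ²/L)·(Ls/(2μ²))^(2^k) for all k ≥ 0. -/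

import Mathlib

open Filter Topology

/-- The ℓ1-norm on `ℝ^d`: `‖x‖₁ = Σᵢ |xᵢ|`. -/
noncomputable def l1Norm {d : ℕ} (x : Fin d → ℝ) : ℝ := ∑ i, |x i|

/-- The ℓ∞-norm on `ℝ^d`: `‖x‖_∞ = maxᵢ |xᵢ|`. -/
noncomputable def linfNorm {d : ℕ} (x : Fin d → ℝ) : ℝ := ⨆ i, |x i|

/-- `H₀(δ) = Σ_{ℓ=0}^∞ δ^(2^ℓ)`. -/
noncomputable def H0 (δ : ℝ) : ℝ := ∑' ℓ : ℕ, δ ^ (2 ^ ℓ)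

/-- The transpose of a continuous linear map `A : ℝⁿ → ℝᵐ` applied to `h ∈ ℝᵐ`:
`(Aᵀ h)ᵢ = Σⱼ Aⱼᵢ hⱼ` where `Aⱼᵢ = (A eᵢ)ⱼ`. -/
noncomputable def transposeApply {n m : ℕ} (A : (Fin n → ℝ) →L[ℝ] (Fin m → ℝ))
    (h : Fin m → ℝ) : Fin n → ℝ :=
  fun i => ∑ j, A (Pi.single i 1) j * h j



lemma l1Norm_nonneg {d : ℕ} (x : Fin d → ℝ) : 0 ≤ l1Norm x :=
  Finset.sum_nonneg fun _ _ => abs_nonneg _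

lemma l1Norm_add_le {d : ℕ} (x y : Fin d → ℝ) : l1Norm (x + y) ≤ l1Norm x + l1Norm y := by
  rw [l1Norm, l1Norm, l1Norm, ← Finset.sum_add_distrib]
  exact Finset.sum_le_sum fun i _ => abs_add_le _ _

lemma l1Norm_neg {d : ℕ} (x : Fin d → ℝ) : l1Norm (-x) = l1Norm x := by
  simp [l1Norm]

lemma l1Norm_sub_le {d : ℕ} (x y : Fin d → ℝ) : l1Norm (x - y) ≤ l1Norm x + l1Norm y := by
  rw [sub_eq_add_neg]; exact (l1Norm_add_le x (-y)).trans (by rw [l1Norm_neg])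

lemma l1Norm_smul {d : ℕ} (t : ℝ) (x : Fin d → ℝ) : l1Norm (t • x) = |t| * l1Norm x := by
  simp [l1Norm, Finset.mul_sum, abs_mul]

lemma eq_zero_of_l1Norm_le_zero {d : ℕ} {x : Fin d → ℝ} (h : l1Norm x ≤ 0) : x = 0 := by
  have h0 : l1Norm x = 0 := le_antisymm h (l1Norm_nonneg x)
  funext i
  have := (Finset.sum_eq_zero_iff_of_nonneg (fun i _ => abs_nonneg (x i))).1 h0 i (Finset.mem_univ i)
  simpa [abs_eq_zero] using this

lemma linfNorm_eq_norm {d : ℕ} (x : Fin d → ℝ) : linfNorm x = ‖x‖ := by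
  rcases isEmpty_or_nonempty (Fin d) with h | h
  · have hx : x = 0 := Subsingleton.elim x 0
    rw [linfNorm, hx]; simp [Real.iSup_of_isEmpty]
  · refine le_antisymm (ciSup_le fun i => ?_) ?_
    · rw [← Real.norm_eq_abs]; exact norm_le_pi_norm x i
    · have h0 : 0 ≤ linfNorm x := Real.iSup_nonneg fun i => abs_nonneg _
      rw [pi_norm_le_iff_of_nonneg h0]
      intro i
      rw [Real.norm_eq_abs]
      exact le_ciSup (f := fun i => |x i|) (Set.Finite.bddAbove (Set.finite_range _)) i

lemma linfNorm_nonneg {d : ℕ} (x : Fin d → ℝ) : 0 ≤ linfNorm x :=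
  Real.iSup_nonneg fun _ => abs_nonneg _

lemma abs_dot_le {d : ℕ} (h b : Fin d → ℝ) : |∑ j, h j * b j| ≤ linfNorm b * l1Norm h := by
  calc |∑ j, h j * b j| ≤ ∑ j, |h j * b j| := Finset.abs_sum_le_sum_abs _ _
    _ ≤ ∑ j, linfNorm b * |h j| := by
        refine Finset.sum_le_sum fun j _ => ?_
        rw [abs_mul, mul_comm]
        refine mul_le_mul_of_nonneg_right ?_ (abs_nonneg _)
        rw [linfNorm_eq_norm, ← Real.norm_eq_abs]; exact norm_le_pi_norm b j
    _ = linfNorm b * l1Norm h := by rw [l1Norm, ← Finset.mul_sum]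

/-- The transpose as a linear map. -/
noncomputable def transposeLin {n m : ℕ} (A : (Fin n → ℝ) →L[ℝ] (Fin m → ℝ)) :
    (Fin m → ℝ) →ₗ[ℝ] (Fin n → ℝ) where
  toFun := transposeApply A
  map_add' x y := by
    funext i; simp [transposeApply, mul_add, Finset.sum_add_distrib]
  map_smul' c x := by
    funext i; simp [transposeApply, Finset.mul_sum]; ring_nf
    exact Finset.sum_congr rfl fun j _ => by ring

lemma single_eq_smul {d : ℕ} (i : Fin d) (c : ℝ) :
    Pi.single i c = c • (Pi.single i 1 : Fin d → ℝ) := by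
  funext j
  by_cases hj : j = i <;> simp [Pi.single_apply, hj]

/-- Key duality lemma: an ℓ1-bounded solution exists. -/
lemma exists_small_solution {n m : ℕ} (A : (Fin n → ℝ) →L[ℝ] (Fin m → ℝ)) (b : Fin m → ℝ)
    (μ : ℝ) (hμ : 0 < μ)
    (hA : ∀ h : Fin m → ℝ, μ * l1Norm h ≤ linfNorm (transposeApply A h)) :
    ∃ v, A v = b ∧ l1Norm v ≤ linfNorm b / μ := by
  set T := transposeLin A with hT
  have hinj : Function.Injective T := by
    rw [injective_iff_map_eq_zero]
    intro h hh
    have := hA h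
    rw [show transposeApply A h = T h from rfl, hh, linfNorm_eq_norm, norm_zero] at this
    have : l1Norm h ≤ 0 := by nlinarith [this]
    exact eq_zero_of_l1Norm_le_zero this
  set e := LinearEquiv.ofInjective T hinj with he
  set C := linfNorm b / μ with hC
  have hC0 : 0 ≤ C := div_nonneg (linfNorm_nonneg b) hμ.le
  -- the dot-product functional
  set dotb : (Fin m → ℝ) →ₗ[ℝ] ℝ :=
    { toFun := fun h => ∑ j, h j * b j
      map_add' := fun x y => by simp [add_mul, Finset.sum_add_distrib]
      map_smul' := fun c x => by
        simp [Finset.mul_sum]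
        exact Finset.sum_congr rfl fun j _ => by ring } with hdotb
  set flin : ↥(LinearMap.range T) →ₗ[ℝ] ℝ := dotb ∘ₗ (e.symm.toLinearMap) with hflin
  have hflin_apply : ∀ h : Fin m → ℝ, flin ⟨T h, LinearMap.mem_range_self T h⟩ = ∑ j, h j * b j := by
    intro h
    have h1 : e h = ⟨T h, LinearMap.mem_range_self T h⟩ := by
      apply Subtype.ext; simp [he, LinearEquiv.ofInjective_apply]
    rw [hflin]; simp only [LinearMap.coe_comp, Function.comp_apply, LinearEquiv.coe_coe]
    rw [← h1, LinearEquiv.symm_apply_apply]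
    rfl
  have hbound : ∀ x : ↥(LinearMap.range T), ‖flin x‖ ≤ C * ‖x‖ := by
    intro x
    obtain ⟨h, hh⟩ := x.2
    have hx : x = ⟨T h, LinearMap.mem_range_self T h⟩ := Subtype.ext hh.symm
    rw [hx, hflin_apply h]
    have h1 : |∑ j, h j * b j| ≤ linfNorm b * l1Norm h := abs_dot_le h b
    have h2 : μ * l1Norm h ≤ linfNorm (T h) := hA h
    have h3 : l1Norm h ≤ linfNorm (T h) / μ := (le_div_iff₀' hμ).2 h2
    have hxnorm : ‖(⟨T h, LinearMap.mem_range_self T h⟩ : ↥(LinearMap.range T))‖ = ‖T h‖ := rfl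
    rw [Real.norm_eq_abs, hxnorm, ← linfNorm_eq_norm]
    calc |∑ j, h j * b j| ≤ linfNorm b * l1Norm h := h1
      _ ≤ linfNorm b * (linfNorm (T h) / μ) :=
          mul_le_mul_of_nonneg_left h3 (linfNorm_nonneg b)
      _ = C * linfNorm (T h) := by rw [hC]; ring
  set F := flin.mkContinuous C hbound with hF
  have hFnorm : ‖F‖ ≤ C := LinearMap.mkContinuous_norm_le flin hC0 hbound
  obtain ⟨g, hg, hgnorm⟩ := exists_extension_norm_eq (LinearMap.range T) F
  set v : Fin n → ℝ := fun i => g (Pi.single i 1) with hv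
  -- g y = ∑ i, y i * v i
  have hgy : ∀ y : Fin n → ℝ, g y = ∑ i, y i * v i := by
    intro y
    conv_lhs => rw [← Finset.univ_sum_single y]
    rw [map_sum]
    refine Finset.sum_congr rfl fun i _ => ?_
    rw [single_eq_smul, map_smul, smul_eq_mul, hv]
  refine ⟨v, ?_, ?_⟩
  · -- A v = b
    funext j
    have h1 : g (T (Pi.single j 1)) = ∑ j', (Pi.single j 1 : Fin m → ℝ) j' * b j' := by
      rw [hg ⟨T (Pi.single j 1), LinearMap.mem_range_self T _⟩]
      have := hflin_apply (Pi.single j 1)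
      rw [hF] at *
      rw [LinearMap.mkContinuous_apply, this]
    have h2 : ∑ j', (Pi.single j 1 : Fin m → ℝ) j' * b j' = b j := by
      simp [Pi.single_apply]
    have h3 : ∀ i, T (Pi.single j 1) i = A (Pi.single i 1) j := by
      intro i
      show transposeApply A (Pi.single j 1) i = _
      simp [transposeApply, Pi.single_apply]
    have h4 : A v j = ∑ i, v i * A (Pi.single i 1) j := by
      conv_lhs => rw [show v = ∑ i, Pi.single i (v i) from (Finset.univ_sum_single v).symm]
      rw [map_sum, Finset.sum_apply]
      refine Finset.sum_congr rfl fun i _ => ?_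
      rw [single_eq_smul, map_smul]
      simp
    rw [h4]
    rw [hgy] at h1
    rw [← h2, ← h1]
    exact Finset.sum_congr rfl fun i _ => by rw [h3 i, mul_comm]
  · -- l1Norm v ≤ C
    rcases Nat.eq_zero_or_pos n with hn | hn
    · have : l1Norm v = 0 := by
        rw [l1Norm]
        have : (Finset.univ : Finset (Fin n)) = ∅ := by
          apply Finset.univ_eq_empty_iff.2
          rw [hn]; exact Fin.isEmpty'
        rw [this, Finset.sum_empty]
      rw [this]; exact hC0
    · set x : Fin n → ℝ := fun i => if 0 ≤ v i then (1:ℝ) else -1 with hx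
      have hxi : ∀ i, x i * v i = |v i| := by
        intro i
        by_cases h : 0 ≤ v i
        · simp [hx, h, abs_of_nonneg h]
        · simp [hx, h, abs_of_neg (lt_of_not_ge h)]
      have hxnorm : ‖x‖ ≤ 1 := by
        rw [pi_norm_le_iff_of_nonneg zero_le_one]
        intro i
        by_cases h : 0 ≤ v i <;> simp [hx, h]
      have hgx : g x = l1Norm v := by
        rw [hgy, l1Norm]
        exact Finset.sum_congr rfl fun i _ => hxi i
      calc l1Norm v = g x := hgx.symm
        _ ≤ ‖g x‖ := le_abs_self _
        _ ≤ ‖g‖ * ‖x‖ := g.le_opNorm x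
        _ ≤ C * 1 := mul_le_mul (by rw [hgnorm]; exact hFnorm) hxnorm (norm_nonneg x) hC0
        _ = C := mul_one C
lemma newton_remainder {n m : ℕ} (P : (Fin n → ℝ) → (Fin m → ℝ)) (hP : ContDiff ℝ 1 P)
    (u w : Fin n → ℝ) (C : ℝ) (hC : 0 ≤ C)
    (hseg : ∀ t ∈ Set.Icc (0:ℝ) 1,
      ‖fderiv ℝ P u w - fderiv ℝ P (u - t • w) w‖ ≤ C * t) :
    ‖P (u - w) - P u + fderiv ℝ P u w‖ ≤ C / 2 := by
  have hdiff : Differentiable ℝ P := hP.differentiable one_ne_zero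
  set γ : ℝ → Fin n → ℝ := fun t => u - t • w with hγ
  have hγcont : Continuous γ := by continuity
  have hγderiv : ∀ t : ℝ, HasDerivAt γ (-w) t := by
    intro t
    have h1 : HasDerivAt (fun t : ℝ => t • w) ((1:ℝ) • w) t :=
      (hasDerivAt_id t).smul_const w
    rw [one_smul] at h1
    exact h1.const_sub u
  set f' : ℝ → Fin m → ℝ := fun t => -(fderiv ℝ P (γ t) w) with hf'
  have hgderiv : ∀ t : ℝ, HasDerivAt (fun t => P (γ t)) (f' t) t := by
    intro t
    have := (hdiff (γ t)).hasFDerivAt.comp_hasDerivAt t (hγderiv t)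
    rw [map_neg] at this
    exact this
  have hf'cont : Continuous f' := by
    have h1 : Continuous fun t => fderiv ℝ P (γ t) :=
      (hP.continuous_fderiv one_ne_zero).comp hγcont
    exact (h1.clm_apply continuous_const).neg
  have hint : ∫ t in (0:ℝ)..1, f' t = P (γ 1) - P (γ 0) := by
    exact intervalIntegral.integral_eq_sub_of_hasDerivAt (f := fun t => P (γ t))
      (fun t _ => hgderiv t) (hf'cont.intervalIntegrable 0 1)
  have hγ1 : γ 1 = u - w := by rw [hγ]; simp
  have hγ0 : γ 0 = u := by rw [hγ]; simp
  set F : ℝ → Fin m → ℝ := fun t => fderiv ℝ P u w - fderiv ℝ P (γ t) w with hFdef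
  have hFint : ∫ t in (0:ℝ)..1, F t = P (u - w) - P u + fderiv ℝ P u w := by
    have hconst : ∫ _ in (0:ℝ)..1, (fderiv ℝ P u w) = fderiv ℝ P u w := by
      simp
    have hsub : ∫ t in (0:ℝ)..1, F t
        = (∫ _ in (0:ℝ)..1, fderiv ℝ P u w) - ∫ t in (0:ℝ)..1, (fderiv ℝ P (γ t) w) := by
      apply intervalIntegral.integral_sub
      · exact intervalIntegrable_const
      · exact ((hP.continuous_fderiv one_ne_zero).comp hγcont |>.clm_apply continuous_const).intervalIntegrable 0 1
    have h2 : ∫ t in (0:ℝ)..1, (fderiv ℝ P (γ t) w) = -(P (γ 1) - P (γ 0)) := by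
      rw [← hint]
      rw [← intervalIntegral.integral_neg]
      congr 1
      funext t
      simp [hf']
    rw [hsub, hconst, h2, hγ1, hγ0]
    abel
  rw [← hFint]
  have hbound : ‖∫ t in (0:ℝ)..1, F t‖ ≤ |∫ t in (0:ℝ)..1, C * t| := by
    apply intervalIntegral.norm_integral_le_abs_of_norm_le
    · have hmeas : MeasurableSet (Set.uIoc (0:ℝ) 1) := measurableSet_uIoc
      apply MeasureTheory.ae_restrict_of_forall_mem hmeas
      intro t ht
      rw [Set.uIoc_of_le zero_le_one] at ht
      exact hseg t ⟨ht.1.le, ht.2⟩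
    · exact (continuous_const.mul continuous_id).intervalIntegrable 0 1
  have hval : ∫ t in (0:ℝ)..1, C * t = C / 2 := by
    rw [intervalIntegral.integral_const_mul, integral_id]
    ring
  rw [hval, abs_of_nonneg (by positivity)] at hbound
  exact hbound


lemma summable_pow_two_pow {δ : ℝ} (h0 : 0 ≤ δ) (h1 : δ < 1) :
    Summable fun ℓ : ℕ => δ ^ 2 ^ ℓ :=
  Summable.of_nonneg_of_le (fun _ => pow_nonneg h0 _)
    (fun ℓ => pow_le_pow_of_le_one h0 h1.le (Nat.lt_two_pow_self (n := ℓ)).le)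
    (summable_geometric_of_lt_one h0 h1)

/-- under the hypotheses of the Mysovskikh-type theorem, every
sparse-Newton sequence from `u⁰` with unit step-size satisfies the quadratic
residual rate `‖P(uᵏ)‖_∞ ≤ (2μ²/L)(Ls/(2μ²))^(2^k)` for all `k ≥ 0`. -/
theorem statement8 {n m : ℕ} (P : (Fin n → ℝ) → (Fin m → ℝ)) (hP : ContDiff ℝ 1 P)
    (u0 : Fin n → ℝ) (s : ℝ) (hs : s = linfNorm (P u0))
    (ρ : ℝ) (hρ : 0 < ρ) (Bρ : Set (Fin n → ℝ)) (hB : Bρ = {v | l1Norm (v - u0) ≤ ρ})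
    (μ : ℝ) (hμ : 0 < μ)
    (hA' : ∀ v ∈ Bρ, ∀ h : Fin m → ℝ,
      μ * l1Norm h ≤ linfNorm (transposeApply (fderiv ℝ P v) h))
    (L : ℝ) (hL : 0 < L)
    (hLip : ∀ a ∈ Bρ, ∀ b ∈ Bρ, ∀ v : Fin n → ℝ,
      linfNorm ((fderiv ℝ P a - fderiv ℝ P b) v) ≤ L * l1Norm (a - b) * l1Norm v)
    (hcond1 : L * s / μ ^ 2 < 2)
    (hcond2 : 2 * μ / L * H0 (L * s / (2 * μ ^ 2)) < ρ)
    -- a sparse-Newton sequence from `u0` with unit step-size: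
    (u w : ℕ → Fin n → ℝ) (hu0 : u 0 = u0)
    (hw_eq : ∀ k, fderiv ℝ P (u k) (w k) = P (u k))
    (hw_min : ∀ k, ∀ v : Fin n → ℝ, fderiv ℝ P (u k) v = P (u k) →
      l1Norm (w k) ≤ l1Norm v)
    (hstep : ∀ k, u (k + 1) = u k - w k) :
    ∀ k : ℕ, linfNorm (P (u k)) ≤ 2 * μ ^ 2 / L * (L * s / (2 * μ ^ 2)) ^ (2 ^ k) := by
  have hμ2 : (0:ℝ) < μ ^ 2 := by positivity
  have hs0 : 0 ≤ s := hs ▸ linfNorm_nonneg _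
  set δ := L * s / (2 * μ ^ 2) with hδ
  have hδ0 : 0 ≤ δ := by positivity
  have hδ1 : δ < 1 := by
    have h1 : L * s < 2 * μ ^ 2 := by
      have := (div_lt_iff₀ hμ2).1 hcond1
      linarith
    rw [hδ, div_lt_one (by positivity)]
    exact h1
  have hsum := summable_pow_two_pow hδ0 hδ1
  have hpart : ∀ k, ∑ j ∈ Finset.range k, δ ^ (2 ^ j) ≤ H0 δ := fun k =>
    Summable.sum_le_tsum _ (fun i _ => pow_nonneg hδ0 _) hsum
  have hcoef : (0:ℝ) ≤ 2 * μ / L := by positivity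
  have hball : ∀ (k : ℕ) {z : Fin n → ℝ},
      l1Norm (z - u0) ≤ 2 * μ / L * ∑ j ∈ Finset.range k, δ ^ (2 ^ j) → z ∈ Bρ := by
    intro k z hz
    rw [hB]
    exact le_trans hz
      (le_of_lt (lt_of_le_of_lt (mul_le_mul_of_nonneg_left (hpart k) hcoef) hcond2))
  have key : ∀ k, l1Norm (u k - u0) ≤ 2 * μ / L * ∑ j ∈ Finset.range k, δ ^ (2 ^ j) ∧
      linfNorm (P (u k)) ≤ 2 * μ ^ 2 / L * δ ^ (2 ^ k) := by
    intro k
    induction k with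
    | zero =>
      constructor
      · simp [hu0, l1Norm]
      · rw [hu0, ← hs]
        have heq : 2 * μ ^ 2 / L * δ ^ (2 ^ 0) = s := by
          rw [hδ, pow_zero, pow_one]
          field_simp
        rw [heq]
    | succ k ih =>
      obtain ⟨ih1, ih2⟩ := ih
      have hmemk : u k ∈ Bρ := hball k ih1
      obtain ⟨v, hv, hvle⟩ :=
        exists_small_solution (fderiv ℝ P (u k)) (P (u k)) μ hμ (hA' (u k) hmemk)
      have hwk : l1Norm (w k) ≤ linfNorm (P (u k)) / μ := (hw_min k v hv).trans hvle
      have hwk' : l1Norm (w k) ≤ 2 * μ / L * δ ^ (2 ^ k) := by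
        refine hwk.trans ?_
        rw [div_le_iff₀ hμ]
        calc linfNorm (P (u k)) ≤ 2 * μ ^ 2 / L * δ ^ (2 ^ k) := ih2
          _ = 2 * μ / L * δ ^ (2 ^ k) * μ := by ring
      have hl1w0 : 0 ≤ l1Norm (w k) := l1Norm_nonneg _
      have hsegbound : ∀ t ∈ Set.Icc (0:ℝ) 1,
          l1Norm (u k - t • w k - u0) ≤ 2 * μ / L * ∑ j ∈ Finset.range (k+1), δ ^ (2 ^ j) := by
        intro t ht
        have heq : u k - t • w k - u0 = (u k - u0) - t • w k := sub_right_comm _ _ _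
        rw [heq]
        calc l1Norm ((u k - u0) - t • w k) ≤ l1Norm (u k - u0) + l1Norm (t • w k) :=
              l1Norm_sub_le _ _
          _ = l1Norm (u k - u0) + |t| * l1Norm (w k) := by rw [l1Norm_smul]
          _ ≤ 2 * μ / L * ∑ j ∈ Finset.range k, δ ^ (2 ^ j) + 1 * l1Norm (w k) := by
              refine add_le_add ih1 (mul_le_mul_of_nonneg_right ?_ hl1w0)
              rw [abs_of_nonneg ht.1]; exact ht.2
          _ ≤ 2 * μ / L * ∑ j ∈ Finset.range k, δ ^ (2 ^ j) + 2 * μ / L * δ ^ (2 ^ k) := by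
              rw [one_mul]; linarith [hwk']
          _ = 2 * μ / L * ∑ j ∈ Finset.range (k+1), δ ^ (2 ^ j) := by
              rw [Finset.sum_range_succ]; ring
      have hsegball : ∀ t ∈ Set.Icc (0:ℝ) 1, u k - t • w k ∈ Bρ := fun t ht =>
        hball (k+1) (hsegbound t ht)
      constructor
      · rw [hstep k]
        have := hsegbound 1 ⟨zero_le_one, le_rfl⟩
        simpa [one_smul] using this
      · rw [hstep k]
        have hCnn : (0:ℝ) ≤ L * (l1Norm (w k)) ^ 2 := by positivity
        have htb : ∀ t ∈ Set.Icc (0:ℝ) 1,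
            ‖fderiv ℝ P (u k) (w k) - fderiv ℝ P (u k - t • w k) (w k)‖ ≤
              (L * (l1Norm (w k)) ^ 2) * t := by
          intro t ht
          have h1 := hLip (u k) hmemk (u k - t • w k) (hsegball t ht) (w k)
          rw [linfNorm_eq_norm, ContinuousLinearMap.sub_apply] at h1
          have h3 : u k - (u k - t • w k) = t • w k := sub_sub_cancel _ _
          rw [h3, l1Norm_smul, abs_of_nonneg ht.1] at h1
          calc ‖fderiv ℝ P (u k) (w k) - fderiv ℝ P (u k - t • w k) (w k)‖
              ≤ L * (t * l1Norm (w k)) * l1Norm (w k) := h1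
            _ = (L * (l1Norm (w k)) ^ 2) * t := by ring
        have hrem := newton_remainder P hP (u k) (w k) (L * (l1Norm (w k)) ^ 2) hCnn htb
        have hPk : P (u k - w k) - P (u k) + fderiv ℝ P (u k) (w k) = P (u k - w k) := by
          rw [hw_eq k]; abel
        rw [hPk] at hrem
        rw [linfNorm_eq_norm]
        have hsq : (l1Norm (w k)) ^ 2 ≤ (2 * μ / L * δ ^ (2 ^ k)) ^ 2 :=
          pow_le_pow_left₀ hl1w0 hwk' 2
        calc ‖P (u k - w k)‖ ≤ L * (l1Norm (w k)) ^ 2 / 2 := hrem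
          _ ≤ L * (2 * μ / L * δ ^ (2 ^ k)) ^ 2 / 2 := by
              have := mul_le_mul_of_nonneg_left hsq hL.le
              linarith
          _ = 2 * μ ^ 2 / L * δ ^ (2 ^ (k + 1)) := by
              have hexp : δ ^ 2 ^ (k + 1) = (δ ^ 2 ^ k) ^ 2 := by
                rw [← pow_mul, pow_succ]
              rw [hexp]
              field_simp
  exact fun k => (key k).2
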